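/- arXiv:1907.02311 — 3 statements merged into one kernel-verified Lean document; each statement's English description precedes it below -/
import Mathlib

section
/- With P_k defined by P₀ = I and P_{k+1} = Ψ(P_k), where Ψ(P)(X₀,...,X_k) = P(X₀,...,X_{k-1})(A + X₀B) + Σ_{i=0}^{k-1} (∂P/∂X_i) X_{i+1}, set Q_i^k = ∂P_k/∂X_{k-i}. Then for every i ≥ 1 there exist matrix-valued polynomials R_i^0, ..., R_i^{i-1} in X₀, ..., X_{i-1} such that Q_i^{i+k} = Σ_{j=0}^{i-1} k^j R_i^j for all integers k ≥ 0, and moreover R_i^{i-1} = B P_{i-1} / (i-1)!. -/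
open MvPolynomial Finset

lemma pderiv_comm' {σ R : Type*} [CommSemiring R] (i j : σ) (p : MvPolynomial σ R) :
    pderiv i (pderiv j p) = pderiv j (pderiv i p) := by
  classical
  induction p using MvPolynomial.induction_on with
  | C a => simp
  | add p q hp hq => simp [hp, hq]
  | mul_X p s hp =>
      simp only [pderiv_mul, map_add, hp, pderiv_X]
      simp only [Pi.single_apply]
      split_ifs <;> simp <;> ring

lemma vars_pderiv {σ R : Type*} [CommSemiring R] [DecidableEq σ] (i : σ) (p : MvPolynomial σ R) :
    (pderiv i p).vars ⊆ p.vars := by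
  classical
  have hrw : pderiv i p =
      ∑ d ∈ p.support, monomial (d - Finsupp.single i 1) (coeff d p * d i) := by
    conv_lhs => rw [p.as_sum]
    rw [map_sum]
    simp [pderiv_monomial]
  intro j hj
  rw [hrw] at hj
  have hj' := vars_sum_subset (R := R) p.support
      (fun d => monomial (d - Finsupp.single i 1) (coeff d p * d i)) hj
  simp only [Finset.mem_biUnion] at hj'
  obtain ⟨d, hd, hjd⟩ := hj'
  by_cases h0 : coeff d p * (d i : R) = 0
  · simp [h0] at hjd
  · rw [vars_monomial h0] at hjd
    rw [mem_vars]
    refine ⟨d, hd, ?_⟩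
    rw [Finsupp.mem_support_iff] at hjd ⊢
    intro hc
    apply hjd
    simp [Finsupp.tsub_apply, hc]

lemma faulhaberQ (p : ℕ) : ∃ c : ℕ → ℚ,
    c (p+1) = ((p:ℚ)+1)⁻¹ ∧ (∀ t, p+2 ≤ t → c t = 0) ∧
    ∀ k : ℕ, ∑ m ∈ range (k+1), (m:ℚ)^p = ∑ t ∈ range (p+2), c t * (k:ℚ)^t := by
  set b : ℕ → ℚ := fun i => bernoulli i * ((p+1).choose i) / (p+1) with hb
  refine ⟨fun t => if t < p+2 then ∑ i ∈ range (p+1), b i * ((p+1-i).choose t) else 0,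
    ?_, ?_, ?_⟩
  · dsimp only
    rw [if_pos (by omega)]
    rw [Finset.sum_eq_single 0]
    · simp [hb]
    · intro i hi hi0
      have hlt : p+1-i < p+1 := by
        simp only [Finset.mem_range] at hi; omega
      rw [Nat.choose_eq_zero_of_lt hlt]
      simp
    · simp
  · intro t ht
    dsimp only
    rw [if_neg (by omega)]
  · intro k
    dsimp only
    have h := sum_range_pow (k+1) p
    push_cast at h
    rw [h]
    have hpow : ∀ i : ℕ, i ∈ range (p+1) →
        b i * ((k:ℚ)+1)^(p+1-i)
          = ∑ t ∈ range (p+2), b i * ((p+1-i).choose t) * (k:ℚ)^t := by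
      intro i _
      rw [add_pow]
      rw [← Finset.sum_subset (Finset.range_subset_range.2 (by omega : (p+1-i)+1 ≤ p+2))]
      · rw [Finset.mul_sum]
        exact Finset.sum_congr rfl fun t ht => by ring
      · intro t ht ht'
        simp only [Finset.mem_range, not_lt] at ht'
        rw [Nat.choose_eq_zero_of_lt (by omega)]
        simp
    have h1 : ∀ i ∈ range (p+1),
        (bernoulli i) * ((p+1).choose i) * ((k:ℚ)+1)^(p+1-i) / (p+1)
          = b i * ((k:ℚ)+1)^(p+1-i) := fun i _ => by rw [hb]; ring
    rw [Finset.sum_congr rfl h1, Finset.sum_congr rfl hpow, Finset.sum_comm]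
    refine Finset.sum_congr rfl fun t ht => ?_
    rw [if_pos (Finset.mem_range.1 ht), Finset.sum_mul]

lemma faulhaberR (p : ℕ) : ∃ c : ℕ → ℝ,
    c (p+1) = ((p:ℝ)+1)⁻¹ ∧ (∀ t, p+2 ≤ t → c t = 0) ∧
    ∀ k : ℕ, ∑ m ∈ range (k+1), (m:ℝ)^p = ∑ t ∈ range (p+2), c t * (k:ℝ)^t := by
  obtain ⟨c, h1, h2, h3⟩ := faulhaberQ p
  refine ⟨fun t => ((c t : ℚ) : ℝ), ?_, ?_, ?_⟩
  · dsimp only; rw [h1]; push_cast; ring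
  · intro t ht; dsimp only; rw [h2 t ht]; simp
  · intro k
    have := h3 k
    have := congrArg (fun q : ℚ => (q : ℝ)) this
    push_cast at this
    convert this using 2 <;> push_cast <;> ring

abbrev MM (n : ℕ) := Matrix (Fin n) (Fin n) (MvPolynomial ℕ ℝ)

noncomputable def Dm {n : ℕ} (m : ℕ) (P : MM n) : MM n := P.map (pderiv m)

variable {n : ℕ}

@[simp] lemma Dm_add (m : ℕ) (P Q : MM n) : Dm m (P + Q) = Dm m P + Dm m Q := by
  ext a b; simp [Dm, Matrix.map_apply]

@[simp] lemma Dm_zero (m : ℕ) : Dm m (0 : MM n) = 0 := by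
  ext a b; simp [Dm, Matrix.map_apply]

lemma Dm_sum {α : Type*} (m : ℕ) (s : Finset α) (f : α → MM n) :
    Dm m (∑ x ∈ s, f x) = ∑ x ∈ s, Dm m (f x) := by
  ext a b; simp [Dm, Matrix.map_apply, Matrix.sum_apply]

lemma Dm_mul (m : ℕ) (P Q : MM n) : Dm m (P * Q) = Dm m P * Q + P * Dm m Q := by
  ext a b
  simp only [Dm, Matrix.map_apply, Matrix.mul_apply, Matrix.add_apply, map_sum, pderiv_mul]
  rw [Finset.sum_add_distrib]

lemma Dm_psmul (m : ℕ) (q : MvPolynomial ℕ ℝ) (P : MM n) :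
    Dm m (q • P) = pderiv m q • P + q • Dm m P := by
  ext a b
  simp only [Dm, Matrix.map_apply, Matrix.smul_apply, Matrix.add_apply, smul_eq_mul, pderiv_mul]

lemma Dm_rsmul (m : ℕ) (c : ℝ) (P : MM n) : Dm m (c • P) = c • Dm m P := by
  ext a b
  simp only [Dm, Matrix.map_apply, Matrix.smul_apply]
  rw [MvPolynomial.smul_eq_C_mul, MvPolynomial.smul_eq_C_mul, pderiv_C_mul]

lemma Dm_constMat (m : ℕ) (M : Matrix (Fin n) (Fin n) ℝ) :
    Dm m (M.map fun r => (C r : MvPolynomial ℕ ℝ)) = 0 := by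
  ext a b; simp [Dm, Matrix.map_apply]

lemma Dm_eq_zero_of_vars {P : MM n} {s l : ℕ}
    (h : ∀ a b, (P a b).vars ⊆ Finset.range s) (hl : s ≤ l) : Dm l P = 0 := by
  refine Matrix.ext fun a b => ?_
  simp only [Dm, Matrix.map_apply, Matrix.zero_apply]
  by_cases hmem : l ∈ (P a b).vars
  · have := h a b hmem
    simp only [Finset.mem_range] at this
    omega
  · exact pderiv_eq_zero_of_notMem_vars hmem

lemma Dm_comm (l m : ℕ) (P : MM n) : Dm l (Dm m P) = Dm m (Dm l P) := by
  refine Matrix.ext fun a b => ?_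
  simp only [Dm, Matrix.map_apply]
  exact pderiv_comm' l m (P a b)



/-- The matrix-valued polynomials `P_k` defined by `P₀ = I` and
`P_{k+1} = Ψ(P_k)` where
`Ψ(P)(X₀,…,X_k) = P(X₀,…,X_{k-1})(A + X₀B) + Σ_{i<k} (∂P/∂X_i) X_{i+1}`. -/
noncomputable def Pmat {n : ℕ} (A B : Matrix (Fin n) (Fin n) ℝ) :
    ℕ → Matrix (Fin n) (Fin n) (MvPolynomial ℕ ℝ)
  | 0 => 1
  | k + 1 =>
      Pmat A B k *
          ((A.map fun r => (MvPolynomial.C r : MvPolynomial ℕ ℝ)) +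
            (MvPolynomial.X 0 : MvPolynomial ℕ ℝ) • (B.map fun r => (MvPolynomial.C r : MvPolynomial ℕ ℝ)))
        + ∑ i ∈ Finset.range k,
            (MvPolynomial.X (i + 1) : MvPolynomial ℕ ℝ) • (Pmat A B k).map fun q => MvPolynomial.pderiv i q

/-- `Q_i^k = ∂P_k/∂X_{k-i}` (entrywise formal partial derivative). -/
noncomputable def Qmat {n : ℕ} (A B : Matrix (Fin n) (Fin n) ℝ) (i k : ℕ) :
    Matrix (Fin n) (Fin n) (MvPolynomial ℕ ℝ) :=
  (Pmat A B k).map fun q => MvPolynomial.pderiv (k - i) q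

noncomputable def ABm {n : ℕ} (A B : Matrix (Fin n) (Fin n) ℝ) : MM n :=
  (A.map fun r => (C r : MvPolynomial ℕ ℝ)) +
    (X 0 : MvPolynomial ℕ ℝ) • (B.map fun r => (C r : MvPolynomial ℕ ℝ))

noncomputable def Bc {n : ℕ} (B : Matrix (Fin n) (Fin n) ℝ) : MM n :=
  B.map fun r => (C r : MvPolynomial ℕ ℝ)

variable (A B : Matrix (Fin n) (Fin n) ℝ)

lemma Pmat_succ (k : ℕ) : Pmat A B (k+1) =
    Pmat A B k * ABm A B + ∑ l ∈ Finset.range k, (X (l+1) : MvPolynomial ℕ ℝ) • Dm l (Pmat A B k) := rfl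

lemma Dm_AB_zero : Dm 0 (ABm A B) = Bc B := by
  rw [ABm, Dm_add, Dm_psmul, Dm_constMat, Dm_constMat]
  simp [pderiv_X_self, Bc]

lemma Dm_AB_succ (m : ℕ) : Dm (m+1) (ABm A B) = 0 := by
  rw [ABm, Dm_add, Dm_psmul, Dm_constMat, Dm_constMat]
  rw [pderiv_X_of_ne (by omega)]
  simp

lemma vars_entries_mul {M N : MM n} {s : Finset ℕ}
    (hM : ∀ a b, (M a b).vars ⊆ s) (hN : ∀ a b, (N a b).vars ⊆ s) :
    ∀ a b, ((M * N) a b).vars ⊆ s := by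
  intro a b
  rw [Matrix.mul_apply]
  refine (vars_sum_subset _ _).trans ?_
  refine Finset.biUnion_subset.2 fun c _ => ?_
  exact (vars_mul _ _).trans (Finset.union_subset (hM a c) (hN c b))

lemma vars_AB : ∀ a b, ((ABm A B) a b).vars ⊆ Finset.range 1 := by
  intro a b
  rw [ABm, Matrix.add_apply, Matrix.smul_apply, Matrix.map_apply, Matrix.map_apply,
    smul_eq_mul]
  refine (vars_add_subset _ _).trans (Finset.union_subset ?_ ?_)
  · simp
  · refine (vars_mul _ _).trans (Finset.union_subset ?_ ?_) <;> simp [vars_X]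

lemma vars_Pmat : ∀ k, ∀ a b, ((Pmat A B k) a b).vars ⊆ Finset.range k := by
  intro k
  induction k with
  | zero =>
      intro a b
      show ((1 : MM n) a b).vars ⊆ _
      rw [Matrix.one_apply]
      split_ifs <;> simp
  | succ k ih =>
      intro a b
      rw [Pmat_succ, Matrix.add_apply]
      refine (vars_add_subset _ _).trans (Finset.union_subset ?_ ?_)
      · refine vars_entries_mul (fun a b => (ih a b).trans ?_)
          (fun a b => (vars_AB A B a b).trans ?_) a b <;>
          exact Finset.range_subset_range.2 (by omega)
      · rw [Matrix.sum_apply]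
        refine (vars_sum_subset _ _).trans (Finset.biUnion_subset.2 fun l hl => ?_)
        rw [Matrix.smul_apply, smul_eq_mul]
        refine (vars_mul _ _).trans (Finset.union_subset ?_ ?_)
        · simp only [vars_X, Finset.mem_range] at hl ⊢
          intro x hx
          simp only [Finset.mem_singleton] at hx
          simp only [Finset.mem_range]
          omega
        · refine ((vars_pderiv _ _).trans (ih a b)).trans (Finset.range_subset_range.2 (by omega))

lemma Dm_Pmat_zero {k m : ℕ} (h : k ≤ m) : Dm m (Pmat A B k) = 0 :=
  Dm_eq_zero_of_vars (vars_Pmat A B k) h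

lemma rec0 (k : ℕ) : Dm 0 (Pmat A B (k+1)) =
    Dm 0 (Pmat A B k) * ABm A B + Pmat A B k * Bc B +
      ∑ l ∈ Finset.range k, (X (l+1) : MvPolynomial ℕ ℝ) • Dm l (Dm 0 (Pmat A B k)) := by
  rw [Pmat_succ, Dm_add, Dm_mul, Dm_AB_zero, Dm_sum]
  congr 1
  refine Finset.sum_congr rfl fun l hl => ?_
  rw [Dm_psmul, pderiv_X_of_ne (by omega), zero_smul, zero_add, Dm_comm]

lemma rec_succ (k s : ℕ) (hs : s < k) : Dm (s+1) (Pmat A B (k+1)) =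
    Dm (s+1) (Pmat A B k) * ABm A B + Dm s (Pmat A B k) +
      ∑ l ∈ Finset.range k, (X (l+1) : MvPolynomial ℕ ℝ) • Dm l (Dm (s+1) (Pmat A B k)) := by
  rw [Pmat_succ, Dm_add, Dm_mul, Dm_AB_succ, mul_zero, add_zero, Dm_sum, add_assoc]
  congr 1
  have hterm : ∀ l ∈ Finset.range k,
      Dm (s+1) ((X (l+1) : MvPolynomial ℕ ℝ) • Dm l (Pmat A B k))
        = (if l = s then Dm l (Pmat A B k) else 0)
            + (X (l+1) : MvPolynomial ℕ ℝ) • Dm l (Dm (s+1) (Pmat A B k)) := by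
    intro l hl
    rw [Dm_psmul, Dm_comm]
    congr 1
    by_cases h : l = s
    · subst h; rw [pderiv_X_self, one_smul, if_pos rfl]
    · rw [pderiv_X_of_ne (by omega), zero_smul, if_neg h]
  rw [Finset.sum_congr rfl hterm, Finset.sum_add_distrib, Finset.sum_ite_eq' (Finset.range k) s]
  rw [if_pos (Finset.mem_range.2 hs)]

lemma DmP_one : ∀ k, Dm k (Pmat A B (k+1)) = Bc B := by
  intro k
  induction k with
  | zero =>
      rw [rec0, Dm_Pmat_zero A B le_rfl]
      show 0 * _ + (1 : MM n) * _ + _ = _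
      simp
  | succ k ih =>
      rw [rec_succ A B (k+1) k (by omega), Dm_Pmat_zero A B le_rfl, ih]
      simp

lemma vars_Bc (s : Finset ℕ) : ∀ a b : Fin n, ((Bc B) a b).vars ⊆ s := by
  intro a b; simp [Bc, Matrix.map_apply, vars_C]

lemma vars_rsmul (c : ℝ) (q : MvPolynomial ℕ ℝ) : (c • q).vars ⊆ q.vars := by
  rw [MvPolynomial.smul_eq_C_mul]
  refine (vars_mul _ _).trans ?_
  simp [vars_C]

lemma sum_pow_zero_smul (N : ℕ) (M : ℕ → MM n) :
    ∑ j ∈ Finset.range (N+1), (0:ℝ)^j • M j = M 0 := by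
  rw [Finset.sum_eq_single 0]
  · simp
  · intro j hj hj0; rw [zero_pow hj0, zero_smul]
  · simp

lemma psmul_rsmul (q : MvPolynomial ℕ ℝ) (c : ℝ) (M : MM n) :
    q • (c • M) = c • (q • M) := by
  ext a b
  simp only [Matrix.smul_apply, smul_eq_mul, MvPolynomial.smul_eq_C_mul]
  ring

lemma main_induction (i : ℕ) : ∃ R : ℕ → MM n,
    (∀ j, ∀ a b : Fin n, ((R j) a b).vars ⊆ Finset.range (i+1)) ∧
    (∀ k : ℕ, Dm k (Pmat A B (i+1+k)) = ∑ j ∈ Finset.range (i+1), (k:ℝ)^j • R j) ∧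
    R i = ((Nat.factorial i : ℝ))⁻¹ • (Bc B * Pmat A B i) := by
  induction i with
  | zero =>
      refine ⟨fun _ => Bc B, fun j a b => by simp [Bc, Matrix.map_apply, vars_C], ?_, ?_⟩
      · intro k
        rw [Finset.sum_range_one, pow_zero, one_smul, show 1+k = k+1 by omega, DmP_one]
      · show Bc B = _
        rw [show Pmat A B 0 = (1 : MM n) from rfl]
        simp
  | succ i ih =>
      obtain ⟨R', hv, hQ, htop⟩ := ih
      set S : ℕ → MM n := fun j => R' j * ABm A B +
        ∑ l ∈ Finset.range (i+1), (X (l+1) : MvPolynomial ℕ ℝ) • Dm l (R' j) with hS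
      have hDmR : ∀ j l, i+1 ≤ l → Dm l (R' j) = 0 :=
        fun j l hl => Dm_eq_zero_of_vars (hv j) hl
      -- telescoping
      have htel : ∀ k : ℕ, Dm k (Pmat A B (i+2+k)) =
          Pmat A B (i+1) * Bc B +
            ∑ m ∈ Finset.range (k+1), ∑ j ∈ Finset.range (i+1), ((m:ℝ)^j) • S j := by
        intro k
        induction k with
        | zero =>
            have h0 : Dm 0 (Pmat A B (i+1)) = R' 0 := by
              have h := hQ 0
              rw [Nat.add_zero] at h
              rw [h]
              exact_mod_cast sum_pow_zero_smul i R'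
            rw [show (i+2+0) = (i+1)+1 by omega, rec0, h0, Finset.sum_range_one,
              Nat.cast_zero, sum_pow_zero_smul i S, hS]
            dsimp only
            abel
        | succ k ihk =>
            have harith : i+1+(k+1) = i+2+k := by omega
            have hQ1 : Dm (k+1) (Pmat A B (i+2+k)) =
                ∑ j ∈ Finset.range (i+1), ((k:ℝ)+1)^j • R' j := by
              have h := hQ (k+1)
              rw [harith] at h
              rw [h]
              refine Finset.sum_congr rfl fun j hj => ?_
              push_cast
              ring_nf
            have hrec := rec_succ A B (i+2+k) k (by omega)
            rw [show (i+2+(k+1)) = (i+2+k)+1 by omega, hrec, hQ1, ihk]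
            -- third term
            have h3 : ∑ l ∈ Finset.range (i+2+k),
                (X (l+1) : MvPolynomial ℕ ℝ) •
                  Dm l (∑ j ∈ Finset.range (i+1), ((k:ℝ)+1)^j • R' j)
                = ∑ j ∈ Finset.range (i+1), ((k:ℝ)+1)^j •
                    (∑ l ∈ Finset.range (i+1),
                      (X (l+1) : MvPolynomial ℕ ℝ) • Dm l (R' j)) := by
              rw [← Finset.sum_subset (Finset.range_subset_range.2 (by omega : i+1 ≤ i+2+k))]
              · have hterm2 : ∀ l ∈ Finset.range (i+1),
                    (X (l+1) : MvPolynomial ℕ ℝ) •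
                        Dm l (∑ j ∈ Finset.range (i+1), ((k:ℝ)+1)^j • R' j)
                      = ∑ j ∈ Finset.range (i+1),
                          ((k:ℝ)+1)^j • ((X (l+1) : MvPolynomial ℕ ℝ) • Dm l (R' j)) := by
                  intro l hl
                  rw [Dm_sum, Finset.smul_sum]
                  refine Finset.sum_congr rfl fun j hj => ?_
                  rw [Dm_rsmul, psmul_rsmul]
                rw [Finset.sum_congr rfl hterm2, Finset.sum_comm]
                refine Finset.sum_congr rfl fun j hj => ?_
                rw [Finset.smul_sum]
              · intro l hl hl'
                simp only [Finset.mem_range, not_lt] at hl'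
                rw [Dm_sum]
                have : ∀ j ∈ Finset.range (i+1),
                    Dm l (((k:ℝ)+1)^j • R' j) = 0 := by
                  intro j hj
                  rw [Dm_rsmul, hDmR j l (by omega), smul_zero]
                rw [Finset.sum_congr rfl this, Finset.sum_const_zero, smul_zero]
            rw [h3]
            -- first term
            have h1 : (∑ j ∈ Finset.range (i+1), ((k:ℝ)+1)^j • R' j) * ABm A B
                = ∑ j ∈ Finset.range (i+1), ((k:ℝ)+1)^j • (R' j * ABm A B) := by
              rw [Finset.sum_mul]
              exact Finset.sum_congr rfl fun j hj => smul_mul_assoc _ _ _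
            rw [h1]
            have hcast : ((k+1 : ℕ):ℝ) = (k:ℝ)+1 := by push_cast; ring
            rw [Finset.sum_range_succ (n := k+1), hcast]
            have hcomb : ∑ j ∈ Finset.range (i+1), ((k:ℝ)+1)^j • (R' j * ABm A B) +
                ∑ j ∈ Finset.range (i+1), ((k:ℝ)+1)^j •
                    (∑ l ∈ Finset.range (i+1),
                      (X (l+1) : MvPolynomial ℕ ℝ) • Dm l (R' j))
                  = ∑ j ∈ Finset.range (i+1), ((k:ℝ)+1)^j • S j := by
              rw [← Finset.sum_add_distrib]
              refine Finset.sum_congr rfl fun j hj => ?_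
              rw [← smul_add]
            rw [← hcomb]
            abel
      choose c hc1 hc2 hc3 using faulhaberR
      refine ⟨fun t => (if t = 0 then Pmat A B (i+1) * Bc B else 0) +
        ∑ j ∈ Finset.range (i+1), (c j t) • S j, ?_, ?_, ?_⟩
      · -- vars bound
        have hvS : ∀ j, ∀ a b : Fin n, ((S j) a b).vars ⊆ Finset.range (i+1+1) := by
          intro j a b
          rw [hS]
          dsimp only
          rw [Matrix.add_apply]
          refine (vars_add_subset _ _).trans (Finset.union_subset ?_ ?_)
          · exact vars_entries_mul
              (fun a b => (hv j a b).trans (Finset.range_subset_range.2 (by omega)))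
              (fun a b => (vars_AB A B a b).trans (Finset.range_subset_range.2 (by omega))) a b
          · rw [Matrix.sum_apply]
            refine (vars_sum_subset _ _).trans (Finset.biUnion_subset.2 fun l hl => ?_)
            rw [Matrix.smul_apply, smul_eq_mul]
            refine (vars_mul _ _).trans (Finset.union_subset ?_ ?_)
            · simp only [Finset.mem_range] at hl
              rw [vars_X]
              intro x hx
              simp only [Finset.mem_singleton] at hx
              simp only [Finset.mem_range]
              omega
            · rw [show (Dm l (R' j)) a b = pderiv l (R' j a b) from rfl]
              exact ((vars_pderiv _ _).trans (hv j a b)).trans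
                (Finset.range_subset_range.2 (by omega))
        intro t a b
        dsimp only
        rw [Matrix.add_apply]
        refine (vars_add_subset _ _).trans (Finset.union_subset ?_ ?_)
        · split_ifs with h
          · exact vars_entries_mul
              (fun a b => (vars_Pmat A B (i+1) a b).trans (Finset.range_subset_range.2 (by omega)))
              (vars_Bc B _) a b
          · simp
        · rw [Matrix.sum_apply]
          refine (vars_sum_subset _ _).trans (Finset.biUnion_subset.2 fun j hj => ?_)
          rw [Matrix.smul_apply]
          exact (vars_rsmul _ _).trans (hvS j a b)
      · -- evaluation identity
        intro k
        rw [show i+1+1+k = i+2+k from rfl, htel k]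
        have hsplit : ∀ t ∈ Finset.range (i+2),
            (k:ℝ)^t • ((if t = 0 then Pmat A B (i+1) * Bc B else 0) +
              ∑ j ∈ Finset.range (i+1), (c j t) • S j)
            = (k:ℝ)^t • (if t = 0 then Pmat A B (i+1) * Bc B else 0) +
              (k:ℝ)^t • ∑ j ∈ Finset.range (i+1), (c j t) • S j :=
          fun t _ => smul_add _ _ _
        rw [show Finset.range (i+1+1) = Finset.range (i+2) from rfl]
        rw [Finset.sum_congr rfl hsplit, Finset.sum_add_distrib]
        have h1 : ∑ t ∈ Finset.range (i+2),
            (k:ℝ)^t • (if t = 0 then Pmat A B (i+1) * Bc B else 0)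
            = Pmat A B (i+1) * Bc B := by
          rw [Finset.sum_eq_single 0]
          · simp
          · intro t ht ht0
            rw [if_neg ht0, smul_zero]
          · simp
        have h2 : ∑ t ∈ Finset.range (i+2),
            (k:ℝ)^t • ∑ j ∈ Finset.range (i+1), (c j t) • S j
            = ∑ m ∈ Finset.range (k+1), ∑ j ∈ Finset.range (i+1), ((m:ℝ)^j) • S j := by
          have hst : ∀ t ∈ Finset.range (i+2),
              (k:ℝ)^t • ∑ j ∈ Finset.range (i+1), (c j t) • S j
              = ∑ j ∈ Finset.range (i+1), (c j t * (k:ℝ)^t) • S j := by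
            intro t ht
            rw [Finset.smul_sum]
            refine Finset.sum_congr rfl fun j hj => ?_
            rw [smul_smul, mul_comm]
          rw [Finset.sum_congr rfl hst, Finset.sum_comm]
          have hjj : ∀ j ∈ Finset.range (i+1),
              ∑ t ∈ Finset.range (i+2), (c j t * (k:ℝ)^t) • S j
              = (∑ m ∈ Finset.range (k+1), (m:ℝ)^j) • S j := by
            intro j hj
            rw [← Finset.sum_smul]
            congr 1
            rw [hc3 j k]
            rw [← Finset.sum_subset (Finset.range_subset_range.2
              (by simp only [Finset.mem_range] at hj; omega : j+2 ≤ i+2))]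
            intro t ht ht'
            simp only [Finset.mem_range, not_lt] at ht'
            rw [hc2 j t ht', zero_mul]
          rw [Finset.sum_congr rfl hjj]
          have hswap : ∀ j ∈ Finset.range (i+1),
              (∑ m ∈ Finset.range (k+1), (m:ℝ)^j) • S j
              = ∑ m ∈ Finset.range (k+1), ((m:ℝ)^j) • S j := by
            intro j hj
            rw [Finset.sum_smul]
          rw [Finset.sum_congr rfl hswap, Finset.sum_comm]
        rw [h1, h2]
      · -- top coefficient
        dsimp only
        rw [if_neg (by omega : ¬ (i+1 = 0)), zero_add]
        have hone : ∑ j ∈ Finset.range (i+1), (c j (i+1)) • S j = (c i (i+1)) • S i := by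
          rw [Finset.sum_eq_single i]
          · intro j hj hji
            simp only [Finset.mem_range] at hj
            rw [hc2 j (i+1) (by omega), zero_smul]
          · intro h
            exact absurd (Finset.mem_range.2 (by omega)) h
        rw [hone, hc1 i]
        have hDmBc : ∀ m : ℕ, Dm m (Bc B) = 0 := fun m => Dm_constMat m B
        have hSi : S i = ((Nat.factorial i : ℝ))⁻¹ • (Bc B * Pmat A B (i+1)) := by
          rw [hS]
          dsimp only
          rw [htop]
          have hterm : ∀ l ∈ Finset.range (i+1),
              (X (l+1) : MvPolynomial ℕ ℝ) •
                  Dm l ((Nat.factorial i : ℝ)⁻¹ • (Bc B * Pmat A B i))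
                = (Nat.factorial i : ℝ)⁻¹ •
                    (Bc B * ((X (l+1) : MvPolynomial ℕ ℝ) • Dm l (Pmat A B i))) := by
            intro l hl
            rw [Dm_rsmul, Dm_mul, hDmBc, zero_mul, zero_add, psmul_rsmul,
              ← Matrix.mul_smul]
          rw [Finset.sum_congr rfl hterm, ← Finset.smul_sum, ← Finset.mul_sum]
          have hres : ∑ l ∈ Finset.range (i+1),
              (X (l+1) : MvPolynomial ℕ ℝ) • Dm l (Pmat A B i)
              = ∑ l ∈ Finset.range i,
              (X (l+1) : MvPolynomial ℕ ℝ) • Dm l (Pmat A B i) := by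
            rw [← Finset.sum_subset (Finset.range_subset_range.2 (by omega : i ≤ i+1))]
            intro l hl hl'
            simp only [Finset.mem_range, not_lt] at hl'
            rw [Dm_Pmat_zero A B hl', smul_zero]
          rw [hres, smul_mul_assoc, mul_assoc, ← smul_add, ← mul_add, ← Pmat_succ]
        rw [hSi, smul_smul]
        congr 1
        rw [Nat.factorial_succ]
        push_cast
        rw [mul_inv]
/-- For every `i ≥ 1` there exist matrix-valued polynomials
`R_i^0, …, R_i^{i-1}` in the variables `X₀, …, X_{i-1}` such that
`Q_i^{i+k} = Σ_{j<i} k^j R_i^j` for all `k ≥ 0`, and `R_i^{i-1} = B P_{i-1}/(i-1)!`. -/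
theorem statement3 {n : ℕ} (A B : Matrix (Fin n) (Fin n) ℝ) (i : ℕ) (hi : 1 ≤ i) :
    ∃ R : ℕ → Matrix (Fin n) (Fin n) (MvPolynomial ℕ ℝ),
      (∀ j < i, ∀ a b : Fin n, ((R j) a b).vars ⊆ Finset.range i) ∧
      (∀ k : ℕ, Qmat A B i (i + k) = ∑ j ∈ Finset.range i, (k : ℝ) ^ j • R j) ∧
      R (i - 1) = ((Nat.factorial (i - 1) : ℝ))⁻¹ •
        ((B.map fun r => (MvPolynomial.C r : MvPolynomial ℕ ℝ)) * Pmat A B (i - 1)) := by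
  obtain ⟨i', rfl⟩ : ∃ i', i = i'+1 := ⟨i-1, by omega⟩
  obtain ⟨R, hv, hQ, htop⟩ := main_induction A B i'
  refine ⟨R, fun j _ a b => hv j a b, ?_, ?_⟩
  · intro k
    have h := hQ k
    show (Pmat A B (i'+1+k)).map (fun q => pderiv ((i'+1+k)-(i'+1)) q) = _
    rw [show (i'+1+k)-(i'+1) = k from by omega]
    exact h
  · simpa [Bc] using htop
end

section
/- Assume (C, A) is observable and 0 lies in the interior of a compact set K₁ ⊂ ℝⁿ, and fix T > 0 and a feedback λ ∈ C^∞(ℝⁿ, ℝ) with λ(0) = 0. Then there exist R > 0 with B(0,R) ⊂ K₁ and η₁ > 0 such that: for any δ ∈ C^∞(ℝⁿ, ℝ) with δ(0) = 0 and sup_{x∈K₁} |δ(x)| < η₁, any trajectory x̂ of the closed-loop observer system that remains in B(0,R) on [0, T] generates a control u(t) = (λ + δ)(x̂(t)) making the bilinear system ẋ = (A + uB)x + bu, y = Cx observable in time T. -/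
open NormedSpace

set_option synthInstance.maxHeartbeats 1000000
set_option maxHeartbeats 1000000

noncomputable instance instNAQ {n : ℕ} : NormedAlgebra ℚ ((Fin n → ℝ) →L[ℝ] (Fin n → ℝ)) :=
  NormedAlgebra.restrictScalars ℚ ℝ _

noncomputable def toL {n : ℕ} (M : Matrix (Fin n) (Fin n) ℝ) : (Fin n → ℝ) →L[ℝ] (Fin n → ℝ) :=
  LinearMap.toContinuousLinearMap (Matrix.mulVecLin M)

@[simp] lemma toL_apply {n : ℕ} (M : Matrix (Fin n) (Fin n) ℝ) (v : Fin n → ℝ) :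
    toL M v = M.mulVec v := rfl

lemma mulVec_norm_le {n : ℕ} (M : Matrix (Fin n) (Fin n) ℝ) (v : Fin n → ℝ) :
    ‖M.mulVec v‖ ≤ ‖toL M‖ * ‖v‖ := by simpa using (toL M).le_opNorm v
lemma mulVecC_norm_le {n : ℕ} (C : Matrix (Fin 1) (Fin n) ℝ) (v : Fin n → ℝ) :
    ‖C.mulVec v‖ ≤ ‖LinearMap.toContinuousLinearMap (Matrix.mulVecLin C)‖ * ‖v‖ := by
  simpa using (LinearMap.toContinuousLinearMap (Matrix.mulVecLin C)).le_opNorm v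
lemma flow_deriv {n : ℕ} (A : Matrix (Fin n) (Fin n) ℝ) (v : Fin n → ℝ) (t : ℝ) :
    HasDerivAt (fun s => exp (s • toL A) v) (A.mulVec (exp (t • toL A) v)) t := by
  have h := (hasDerivAt_exp_smul_const' (𝕂 := ℝ) (toL A) t).clm_apply (hasDerivAt_const t v)
  simpa using h
lemma sphere_norm_le {n : ℕ} (x : Fin n → ℝ) (hx : (∑ i, x i ^ 2) = 1) : ‖x‖ ≤ 1 := by
  apply pi_norm_le_iff_of_nonneg zero_le_one |>.2
  intro i
  have hle : x i ^ 2 ≤ 1 := by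
    rw [← hx]; exact Finset.single_le_sum (fun j _ => sq_nonneg (x j)) (Finset.mem_univ i)
  rw [Real.norm_eq_abs, abs_le]; constructor <;> nlinarith


lemma obs_nonvanish {n : ℕ} (A : Matrix (Fin n) (Fin n) ℝ) (C : Matrix (Fin 1) (Fin n) ℝ)
    (hobs : (Matrix.of fun (i : Fin n) (j : Fin n) => (C * A ^ (i : ℕ)) 0 j).rank = n)
    {T : ℝ} (hT : 0 < T) (ω₀ : Fin n → ℝ)
    (h : ∀ t ∈ Set.Icc (0:ℝ) T, C.mulVec (exp (t • toL A) ω₀) = 0) : ω₀ = 0 := by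
  have hind : ∀ k : ℕ, ∀ t ∈ Set.Ioo (0:ℝ) T,
      (C * A ^ k).mulVec (exp (t • toL A) ω₀) = 0 := by
    intro k
    induction k with
    | zero => intro t ht; simpa using h t (Set.Ioo_subset_Icc_self ht)
    | succ k ih =>
      intro t ht
      have hderiv : HasDerivAt (fun s => (C * A ^ k).mulVec (exp (s • toL A) ω₀))
          ((C * A ^ (k+1)).mulVec (exp (t • toL A) ω₀)) t := by
        have h1 := flow_deriv A ω₀ t
        have h2 := ((Matrix.mulVecLin (C * A ^ k)).toContinuousLinearMap).hasFDerivAt.comp_hasDerivAt t h1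
        simp only [LinearMap.coe_toContinuousLinearMap', Matrix.mulVecLin_apply,
          Function.comp_def] at h2
        convert h2 using 1
        · rfl
        · rfl
        · rfl
        rw [Matrix.mulVec_mulVec, pow_succ, Matrix.mul_assoc]
      have hzero : HasDerivAt (fun s => (C * A ^ k).mulVec (exp (s • toL A) ω₀))
          (0 : Fin 1 → ℝ) t := by
        have hev : (fun s => (C * A ^ k).mulVec (exp (s • toL A) ω₀))
            =ᶠ[nhds t] (fun _ => (0 : Fin 1 → ℝ)) := by
          filter_upwards [Ioo_mem_nhds ht.1 ht.2] with s hs using ih s hs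
        exact (hasDerivAt_const t (0 : Fin 1 → ℝ)).congr_of_eventuallyEq hev
      exact hderiv.unique hzero
  set ψ : Fin n → ℝ := exp ((T/2) • toL A) ω₀ with hψ
  have hmid : T/2 ∈ Set.Ioo (0:ℝ) T := ⟨by linarith, by linarith⟩
  have hk : ∀ k : ℕ, (C * A ^ k).mulVec ψ = 0 := fun k => hind k _ hmid
  set O : Matrix (Fin n) (Fin n) ℝ := Matrix.of fun (i : Fin n) (j : Fin n) => (C * A ^ (i : ℕ)) 0 j with hO
  have hOψ : O.mulVec ψ = 0 := by
    funext i
    have := congrFun (hk i) 0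
    simpa [O, Matrix.mulVec, dotProduct] using this
  have hinj : Function.Injective O.mulVecLin := by
    have hsurj : Function.Surjective O.mulVecLin := by
      rw [← LinearMap.range_eq_top]
      apply Submodule.eq_top_of_finrank_eq
      rw [← Matrix.rank, hobs]
      simp
    exact (LinearMap.injective_iff_surjective).2 hsurj
  have hψ0 : ψ = 0 := by
    have : O.mulVecLin ψ = O.mulVecLin 0 := by simpa [Matrix.mulVecLin_apply] using hOψ
    exact hinj this
  have hone : exp ((-(T/2)) • toL A) * exp ((T/2) • toL A) = 1 := by
    rw [← NormedSpace.exp_add_of_commute (((Commute.refl (toL A)).smul_left _).smul_right _)]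
    rw [← add_smul]
    simp
  have hinv : ω₀ = (exp ((-(T/2)) • toL A) * exp ((T/2) • toL A)) ω₀ := by
    rw [hone]; simp
  rw [ContinuousLinearMap.mul_apply, ← hψ, hψ0] at hinv
  simpa using hinv

lemma exists_eta0 {n : ℕ} (A : Matrix (Fin n) (Fin n) ℝ) (C : Matrix (Fin 1) (Fin n) ℝ)
    (hobs : (Matrix.of fun (i : Fin n) (j : Fin n) => (C * A ^ (i : ℕ)) 0 j).rank = n)
    {T : ℝ} (hT : 0 < T) :
    ∃ η₀ > 0, ∀ ω₀ : Fin n → ℝ, (∑ i, ω₀ i ^ 2) = 1 →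
      ∃ t ∈ Set.Icc (0:ℝ) T, η₀ ≤ ‖C.mulVec (exp (t • toL A) ω₀)‖ := by
  by_contra hcon
  push_neg at hcon
  -- nested compact sets
  set E : ℕ → Set (Fin n → ℝ) := fun k =>
    {x | (∑ i, x i ^ 2) = 1 ∧ ∀ t ∈ Set.Icc (0:ℝ) T, ‖C.mulVec (exp (t • toL A) x)‖ ≤ 1/(k+1)}
    with hE
  have hcont : ∀ t : ℝ, Continuous fun x : Fin n → ℝ => ‖C.mulVec (exp (t • toL A) x)‖ := by
    intro t
    exact ((Matrix.mulVecLin C).toContinuousLinearMap.continuous.comp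
      (exp (t • toL A)).continuous).norm
  have hScl : IsClosed {x : Fin n → ℝ | (∑ i, x i ^ 2) = 1} :=
    isClosed_eq (by continuity) continuous_const
  have hclosed : ∀ k, IsClosed (E k) := by
    intro k
    apply hScl.inter
    have : {x : Fin n → ℝ | ∀ t ∈ Set.Icc (0:ℝ) T, ‖C.mulVec (exp (t • toL A) x)‖ ≤ 1/(k+1)}
        = ⋂ t ∈ Set.Icc (0:ℝ) T, {x | ‖C.mulVec (exp (t • toL A) x)‖ ≤ 1/(k+1)} := by
      ext y; simp
    rw [show (fun x : Fin n → ℝ => ∀ t ∈ Set.Icc (0:ℝ) T, ‖C.mulVec (exp (t • toL A) x)‖ ≤ 1/(k+1)) = {x : Fin n → ℝ | ∀ t ∈ Set.Icc (0:ℝ) T, ‖C.mulVec (exp (t • toL A) x)‖ ≤ 1/(k+1)} from rfl, this]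
    exact isClosed_biInter fun t ht => isClosed_le (hcont t) continuous_const
  have hsub : ∀ k, E k ⊆ Metric.closedBall 0 1 := by
    intro k x hx
    rw [Metric.mem_closedBall, dist_zero_right]
    apply pi_norm_le_iff_of_nonneg zero_le_one |>.2
    intro i
    have hle : x i ^ 2 ≤ 1 := by
      rw [← hx.1]
      exact Finset.single_le_sum (fun j _ => sq_nonneg (x j)) (Finset.mem_univ i)
    rw [Real.norm_eq_abs, abs_le]
    constructor <;> nlinarith
  have hne : ∀ k, (E k).Nonempty := by
    intro k
    obtain ⟨x, hx1, hx2⟩ := hcon (1/(k+1)) (by positivity)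
    exact ⟨x, hx1, fun t ht => (hx2 t ht).le⟩
  have hcomp : ∀ k, IsCompact (E k) := fun k =>
    (isCompact_closedBall (0 : Fin n → ℝ) 1).of_isClosed_subset (hclosed k) (hsub k)
  have hmono : ∀ i j : ℕ, i ≤ j → E j ⊆ E i := by
    intro i j hij x hx
    refine ⟨hx.1, fun t ht => (hx.2 t ht).trans ?_⟩
    apply one_div_le_one_div_of_le (by positivity)
    exact_mod_cast by omega
  have hdir : Directed (· ⊇ ·) E := fun i j =>
    ⟨max i j, hmono i _ (le_max_left _ _), hmono j _ (le_max_right _ _)⟩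
  obtain ⟨x, hx⟩ := IsCompact.nonempty_iInter_of_directed_nonempty_isCompact_isClosed
    E hdir hne hcomp hclosed
  simp only [Set.mem_iInter] at hx
  have hx1 : (∑ i, x i ^ 2) = 1 := (hx 0).1
  have hzero : ∀ t ∈ Set.Icc (0:ℝ) T, C.mulVec (exp (t • toL A) x) = 0 := by
    intro t ht
    rw [← norm_eq_zero]
    by_contra hne0
    have hpos : 0 < ‖C.mulVec (exp (t • toL A) x)‖ :=
      lt_of_le_of_ne (norm_nonneg _) (Ne.symm hne0)
    obtain ⟨k, hk⟩ := exists_nat_one_div_lt hpos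
    exact absurd ((hx k).2 t ht) (by push_cast; push_cast at hk; linarith)
  have := obs_nonvanish A C hobs hT x hzero
  rw [this] at hx1
  simp at hx1

/-- The open Euclidean ball of radius `R` centred at `0` in `Fin n → ℝ`. -/
noncomputable def eball {n : ℕ} (R : ℝ) : Set (Fin n → ℝ) :=
  {x | Real.sqrt (∑ i, x i ^ 2) < R}

lemma eball_subset_ball {n : ℕ} {R : ℝ} {x : Fin n → ℝ} (hR : 0 < R) (hx : x ∈ eball R) :
    ‖x‖ < R := by
  rw [pi_norm_lt_iff hR]
  intro i
  rw [Real.norm_eq_abs, ← Real.sqrt_sq_eq_abs]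
  calc Real.sqrt (x i ^ 2) ≤ Real.sqrt (∑ j, x j ^ 2) :=
        Real.sqrt_le_sqrt (Finset.single_le_sum (fun j _ => sq_nonneg (x j)) (Finset.mem_univ i))
    _ < R := hx

/-- Assume `(C,A)` is observable, `0` lies in the interior of a
compact set `K₁`, `T > 0`, and `lam` is a smooth feedback with `lam 0 = 0`. Then there
are `R > 0` with `B(0,R) ⊆ K₁` and `η₁ > 0` such that for any smooth `δ` with
`δ 0 = 0` and `sup_{K₁} |δ| < η₁`, any trajectory `x̂` remaining in `B(0,R)` on `[0,T]`
generates a control `u = (lam + δ) ∘ x̂` making the system `ẋ = (A+uB)x + bu`, `y = Cx`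
observable in time `T` (every unit-sphere solution of `ω̇ = (A+uB)ω` has `Cω ≢ 0`). -/
theorem statement12 {n : ℕ} (A B : Matrix (Fin n) (Fin n) ℝ)
    (C : Matrix (Fin 1) (Fin n) ℝ) (b : Fin n → ℝ)
    (hobs : (Matrix.of fun (i : Fin n) (j : Fin n) => (C * A ^ (i : ℕ)) 0 j).rank = n)
    (K₁ : Set (Fin n → ℝ)) (hK₁ : IsCompact K₁) (h0 : (0 : Fin n → ℝ) ∈ interior K₁)
    (T : ℝ) (hT : 0 < T)
    (lam : (Fin n → ℝ) → ℝ) (hlam : ContDiff ℝ (⊤ : ℕ∞) lam) (hlam0 : lam 0 = 0) :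
    ∃ R > 0, eball R ⊆ K₁ ∧ ∃ η₁ > 0,
      ∀ δ : (Fin n → ℝ) → ℝ, ContDiff ℝ (⊤ : ℕ∞) δ → δ 0 = 0 →
        (∀ x ∈ K₁, |δ x| < η₁) →
        ∀ xhat : ℝ → Fin n → ℝ, Continuous xhat →
          (∀ t ∈ Set.Icc (0 : ℝ) T, xhat t ∈ eball R) →
          ∀ ω₀ : Fin n → ℝ, (∑ i, ω₀ i ^ 2) = 1 →
            ∀ ω : ℝ → Fin n → ℝ, ω 0 = ω₀ →
              (∀ t, HasDerivAt ω
                ((A + (lam (xhat t) + δ (xhat t)) • B).mulVec (ω t)) t) →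
              ∃ t ∈ Set.Icc (0 : ℝ) T, C.mulVec (ω t) ≠ 0 := by
  obtain ⟨η₀, hη₀, hη⟩ := exists_eta0 A C hobs hT
  set KA := ‖toL A‖ with hKA
  set KB := ‖toL B‖ with hKB
  set KC := ‖LinearMap.toContinuousLinearMap (Matrix.mulVecLin C)‖ with hKC
  set K' : ℝ := KA + KB + 1 with hK'
  have hKA0 : 0 ≤ KA := norm_nonneg _
  have hKB0 : 0 ≤ KB := norm_nonneg _
  have hKC0 : 0 ≤ KC := norm_nonneg _
  have hK'1 : 1 ≤ K' := by simp [hK']; linarith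
  have hK'0 : 0 < K' := by linarith
  set Mb : ℝ := Real.exp (K' * T) with hMb
  have hMb1 : 1 ≤ Mb := by
    rw [hMb, ← Real.exp_zero]
    exact Real.exp_le_exp.2 (by positivity)
  have hMb0 : 0 < Mb := by linarith
  set D : ℝ := KC * KB * Mb * Mb with hD
  have hD0 : 0 ≤ D := by positivity
  set uM : ℝ := min 1 (η₀ / (2 * (D + 1))) with huM
  have huM0 : 0 < uM := lt_min one_pos (by positivity)
  have huM1 : uM ≤ 1 := min_le_left _ _
  have huMD : uM * D < η₀ / 2 := by
    have h1 : uM ≤ η₀ / (2 * (D + 1)) := min_le_right _ _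
    have h2 : uM * D ≤ η₀ / (2 * (D + 1)) * D := by nlinarith
    calc uM * D ≤ η₀ / (2 * (D + 1)) * D := h2
      _ < η₀ / 2 := by
          rw [div_mul_eq_mul_div, div_lt_div_iff₀ (by positivity) (by positivity)]
          nlinarith
  -- choose R
  rw [mem_interior_iff_mem_nhds, Metric.mem_nhds_iff] at h0
  obtain ⟨r1, hr1, hball1⟩ := h0
  obtain ⟨r2, hr2, hlamb⟩ := Metric.continuousAt_iff.1 hlam.continuous.continuousAt (uM/2) (by positivity)
  set R : ℝ := min r1 r2 with hR
  have hR0 : 0 < R := lt_min hr1 hr2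
  have hsubK : eball R ⊆ K₁ := by
    intro x hx
    apply hball1
    rw [Metric.mem_ball, dist_zero_right]
    exact lt_of_lt_of_le (eball_subset_ball hR0 hx) (min_le_left _ _)
  refine ⟨R, hR0, hsubK, uM/2, by positivity, ?_⟩
  intro δ hδ hδ0 hδb xhat hxhatc hxhat ω₀ hω₀ ω hω0 hω
  set u : ℝ → ℝ := fun t => lam (xhat t) + δ (xhat t) with hu
  have huB : ∀ t ∈ Set.Icc (0:ℝ) T, |u t| ≤ uM := by
    intro t ht
    have h1 : |lam (xhat t)| < uM / 2 := by
      have := hlamb (x := xhat t) ?_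
      · rwa [Real.dist_eq, hlam0, sub_zero] at this
      · rw [dist_zero_right]
        exact lt_of_lt_of_le (eball_subset_ball hR0 (hxhat t ht)) (min_le_right _ _)
    have h2 : |δ (xhat t)| < uM / 2 := hδb _ (hsubK (hxhat t ht))
    calc |u t| ≤ |lam (xhat t)| + |δ (xhat t)| := abs_add_le _ _
      _ ≤ uM := by linarith
  have hωcont : Continuous ω := by
    rw [continuous_iff_continuousAt]; exact fun t => (hω t).continuousAt
  -- first Gronwall bound : ‖ω t‖ ≤ Mb on [0,T]
  have hbound1 : ∀ t ∈ Set.Icc (0:ℝ) T, ‖ω t‖ ≤ Mb := by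
    have key := norm_le_gronwallBound_of_norm_deriv_right_le (δ := 1) (K := K') (ε := 0)
      (a := 0) (b := T) (f := ω) (f' := fun t => (A + u t • B).mulVec (ω t))
      (hωcont.continuousOn) (fun x _ => (hω x).hasDerivWithinAt)
      (by rw [hω0]; exact sphere_norm_le ω₀ hω₀) ?_
    · intro t ht
      have := key t ht
      rw [gronwallBound_of_K_ne_0 (ne_of_gt hK'0)] at this
      simp only [sub_zero, zero_div, zero_mul, add_zero, one_mul] at this
      calc ‖ω t‖ ≤ Real.exp (K' * t) := this
        _ ≤ Mb := Real.exp_le_exp.2 (by nlinarith [ht.2])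
    · intro t ht
      have hub := huB t ⟨ht.1, ht.2.le⟩
      calc ‖(A + u t • B).mulVec (ω t)‖
          = ‖A.mulVec (ω t) + u t • B.mulVec (ω t)‖ := by
            rw [Matrix.add_mulVec, Matrix.smul_mulVec]
        _ ≤ ‖A.mulVec (ω t)‖ + ‖u t • B.mulVec (ω t)‖ := norm_add_le _ _
        _ ≤ KA * ‖ω t‖ + |u t| * (KB * ‖ω t‖) := by
            rw [norm_smul, Real.norm_eq_abs]
            exact add_le_add (mulVec_norm_le A _)
              (mul_le_mul_of_nonneg_left (mulVec_norm_le B _) (abs_nonneg _))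
        _ ≤ K' * ‖ω t‖ + 0 := by
            have h4 : |u t| * (KB * ‖ω t‖) ≤ KB * ‖ω t‖ := by
              have := mul_le_mul_of_nonneg_right (hub.trans huM1)
                (show (0:ℝ) ≤ KB * ‖ω t‖ by positivity)
              simpa using this
            rw [hK', add_mul, add_mul, one_mul]
            have := norm_nonneg (ω t)
            linarith
  -- error function
  set e : ℝ → Fin n → ℝ := fun t => ω t - exp (t • toL A) ω₀ with he
  have hederiv : ∀ t, HasDerivAt e
      (A.mulVec (e t) + u t • B.mulVec (ω t)) t := by
    intro t
    have h1 := (hω t).sub (flow_deriv A ω₀ t)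
    convert h1 using 1
    · rfl
    · rfl
    · rfl
    · rfl
    rw [he]
    simp only [Matrix.add_mulVec, Matrix.smul_mulVec, Matrix.mulVec_sub]
    abel
  have hecont : Continuous e := by
    apply hωcont.sub
    have : Continuous fun t : ℝ => exp (t • toL A) := by
      apply (NormedSpace.exp_continuous).comp
      exact continuous_id.smul continuous_const
    exact (ContinuousLinearMap.apply ℝ (Fin n → ℝ) ω₀).continuous.comp this
  have he0 : e 0 = 0 := by
    rw [he]; simp [hω0, NormedSpace.exp_zero]
  have hbound2 : ∀ t ∈ Set.Icc (0:ℝ) T, ‖e t‖ ≤ uM * KB * Mb * Mb := by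
    have key := norm_le_gronwallBound_of_norm_deriv_right_le (δ := 0) (K := K')
      (ε := uM * KB * Mb) (a := 0) (b := T) (f := e)
      (f' := fun t => A.mulVec (e t) + u t • B.mulVec (ω t))
      (hecont.continuousOn) (fun x _ => (hederiv x).hasDerivWithinAt)
      (by rw [he0]; simp) ?_
    · intro t ht
      have := key t ht
      rw [gronwallBound_of_K_ne_0 (ne_of_gt hK'0)] at this
      simp only [sub_zero, zero_mul, zero_add] at this
      have hexp : Real.exp (K' * t) ≤ Mb := Real.exp_le_exp.2 (by nlinarith [ht.2])
      calc ‖e t‖ ≤ uM * KB * Mb / K' * (Real.exp (K' * t) - 1) := this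
        _ ≤ uM * KB * Mb * Mb := by
            rw [div_mul_eq_mul_div, div_le_iff₀ hK'0]
            have hF : (0:ℝ) ≤ uM * KB * Mb := by positivity
            have hMK : Mb * 1 ≤ Mb * K' := mul_le_mul_of_nonneg_left hK'1 hMb0.le
            have h5 : Real.exp (K' * t) - 1 ≤ Mb * K' := by linarith
            calc uM * KB * Mb * (Real.exp (K' * t) - 1)
                ≤ uM * KB * Mb * (Mb * K') := mul_le_mul_of_nonneg_left h5 hF
              _ = uM * KB * Mb * Mb * K' := by ring
    · intro t ht
      have hub := huB t ⟨ht.1, ht.2.le⟩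
      have hωb := hbound1 t ⟨ht.1, ht.2.le⟩
      calc ‖A.mulVec (e t) + u t • B.mulVec (ω t)‖
          ≤ ‖A.mulVec (e t)‖ + ‖u t • B.mulVec (ω t)‖ := norm_add_le _ _
        _ ≤ KA * ‖e t‖ + |u t| * (KB * ‖ω t‖) := by
            rw [norm_smul, Real.norm_eq_abs]
            exact add_le_add (mulVec_norm_le A _)
              (mul_le_mul_of_nonneg_left (mulVec_norm_le B _) (abs_nonneg _))
        _ ≤ K' * ‖e t‖ + uM * KB * Mb := by
            have h4 : |u t| * (KB * ‖ω t‖) ≤ uM * (KB * Mb) :=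
              mul_le_mul hub (mul_le_mul_of_nonneg_left hωb hKB0)
                (by positivity) huM0.le
            rw [hK', add_mul, add_mul, one_mul]
            have := norm_nonneg (e t)
            linarith [h4, mul_nonneg hKB0 (norm_nonneg (e t))]
  -- conclude
  obtain ⟨t₀, ht₀, hηt₀⟩ := hη ω₀ hω₀
  refine ⟨t₀, ht₀, ?_⟩
  intro hcz
  have hsplit : C.mulVec (exp (t₀ • toL A) ω₀) = - C.mulVec (e t₀) := by
    rw [he]
    simp only [Matrix.mulVec_sub, hcz]
    abel
  have h1 : η₀ ≤ ‖C.mulVec (e t₀)‖ := by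
    rw [hsplit, norm_neg] at hηt₀; exact hηt₀
  have h2 : ‖C.mulVec (e t₀)‖ ≤ KC * ‖e t₀‖ := mulVecC_norm_le C _
  have h3 : ‖e t₀‖ ≤ uM * KB * Mb * Mb := hbound2 t₀ ht₀
  have : η₀ ≤ uM * D := by
    calc η₀ ≤ KC * ‖e t₀‖ := le_trans h1 h2
      _ ≤ KC * (uM * KB * Mb * Mb) := by nlinarith
      _ = uM * D := by rw [hD]; ring
  linarith
end

section
/- Consider the extended system x̂̇ = (A + u₀B)x̂ + bu₀ − L(ξ)Cε, ε̇ = (A + u₀B − L(ξ)C)ε, ξ̇ = f(ξ, u₀) with constant input u₀, where the observer (f, L) satisfies: on the Kalman observability decomposition of (C, A + u₀B), the correction term on the observable block converges to 0 along every trajectory, and ker L₁(ξ₁₁) ∩ Im C₁ = {0}. If (C, A + u₀B) has C ≠ 0 and x̂ is constant in time, then L(ξ(t))Cε(t) = 0 for all t ≥ 0. -/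
open Matrix

/-- Upper-left `k×k` block of an `(k+l)×(k+l)` matrix. -/
def blk11 {k l : ℕ} (M : Matrix (Fin (k + l)) (Fin (k + l)) ℝ) :
    Matrix (Fin k) (Fin k) ℝ :=
  Matrix.of fun i j => M (finSumFinEquiv (Sum.inl i)) (finSumFinEquiv (Sum.inl j))

/-- Left `m×k` block of an `m×(k+l)` matrix. -/
def blkC1 {m k l : ℕ} (M : Matrix (Fin m) (Fin (k + l)) ℝ) :
    Matrix (Fin m) (Fin k) ℝ :=
  Matrix.of fun i j => M i (finSumFinEquiv (Sum.inl j))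

/-- First `k` components of a vector in `ℝ^{k+l}`. -/
def vec1 {k l : ℕ} (x : Fin (k + l) → ℝ) : Fin k → ℝ :=
  fun i => x (finSumFinEquiv (Sum.inl i))

/-- The `(1,1)`-block `ξ₁₁` of the transformed observer state `T ξ Tᵀ`. -/
def xi11 {k l : ℕ} (T ξ : Matrix (Fin (k + l)) (Fin (k + l)) ℝ) :
    Matrix (Fin k) (Fin k) ℝ :=
  blk11 (T * ξ * Tᵀ)


lemma sum_split_kl {k l : ℕ} (g : Fin (k + l) → ℝ) :
    ∑ j, g j = (∑ j : Fin k, g (finSumFinEquiv (Sum.inl j))) +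
      ∑ j : Fin l, g (finSumFinEquiv (Sum.inr j)) := by
  rw [← finSumFinEquiv.sum_comp g, Fintype.sum_sum_type]

lemma key_C {m k l : ℕ} (Cm : Matrix (Fin m) (Fin (k+l)) ℝ)
    (T : Matrix (Fin (k+l)) (Fin (k+l)) ℝ) (hT : IsUnit T.det)
    (hC2 : ∀ (i : Fin m) (j : Fin l), (Cm * T⁻¹) i (finSumFinEquiv (Sum.inr j)) = 0)
    (e : Fin (k+l) → ℝ) :
    (blkC1 (Cm * T⁻¹)).mulVec (vec1 (T.mulVec e)) = Cm.mulVec e := by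
  have h1 : Cm.mulVec e = (Cm * T⁻¹).mulVec (T.mulVec e) := by
    rw [mulVec_mulVec, Matrix.mul_assoc, Matrix.nonsing_inv_mul T hT, Matrix.mul_one]
  rw [h1]
  funext i
  show _ = ∑ j, (Cm * T⁻¹) i j * (T.mulVec e) j
  rw [sum_split_kl (fun j => (Cm * T⁻¹) i j * (T.mulVec e) j)]
  simp only [hC2, zero_mul, Finset.sum_const_zero, add_zero]
  rfl

/-- Consider `x̂̇ = (A+u₀B)x̂ + bu₀ − L(ξ)Cε`,
`ε̇ = (A+u₀B − L(ξ)C)ε`, `ξ̇ = f(ξ)` with constant input `u₀`, where `C ≠ 0` and the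
Kalman observability decomposition of `(C, A+u₀B)` is given by `T` (block lower
triangular `T(A+u₀B)T⁻¹`, `CT⁻¹ = [C₁ 0]`, `(C₁,A₁₁)` observable with `k ≥ 1`).
Assume the observer is compatible with the decomposition ((H1): `f₁₁`, `L₁` govern
the observable block), the correction term on the observable block converges to `0`
along every trajectory ((H2)), and `ker L₁(ξ₁₁) ∩ Im C₁ = {0}` ((H3)). If `x̂` is
constant, then `L(ξ(t)) C ε(t) = 0` for all `t ≥ 0`. -/
theorem statement19 {k l m : ℕ} (hk : 0 < k)
    (A B : Matrix (Fin (k + l)) (Fin (k + l)) ℝ) (b : Fin (k + l) → ℝ)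
    (Cm : Matrix (Fin m) (Fin (k + l)) ℝ) (hC : Cm ≠ 0) (u₀ : ℝ)
    (f : Matrix (Fin (k + l)) (Fin (k + l)) ℝ → Matrix (Fin (k + l)) (Fin (k + l)) ℝ)
    (L : Matrix (Fin (k + l)) (Fin (k + l)) ℝ → Matrix (Fin (k + l)) (Fin m) ℝ)
    -- Kalman observability decomposition of (C, A + u₀B):
    (T : Matrix (Fin (k + l)) (Fin (k + l)) ℝ) (hT : IsUnit T.det)
    (hA12 : ∀ (i : Fin k) (j : Fin l),
        (T * (A + u₀ • B) * T⁻¹) (finSumFinEquiv (Sum.inl i))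
          (finSumFinEquiv (Sum.inr j)) = 0)
    (hC2 : ∀ (i : Fin m) (j : Fin l), (Cm * T⁻¹) i (finSumFinEquiv (Sum.inr j)) = 0)
    (hobs : (Matrix.of fun (p : Fin k × Fin m) (j : Fin k) =>
        (blkC1 (Cm * T⁻¹) * blk11 (T * (A + u₀ • B) * T⁻¹) ^ ((p.1 : ℕ))) p.2 j).rank
        = k)
    -- (H1): the observer dynamics and gain are compatible with the decomposition:
    (f₁₁ : Matrix (Fin k) (Fin k) ℝ → Matrix (Fin k) (Fin k) ℝ)
    (L₁ : Matrix (Fin k) (Fin k) ℝ → Matrix (Fin k) (Fin m) ℝ)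
    (hf11 : ∀ ξ, blk11 (T * f ξ * Tᵀ) = f₁₁ (xi11 T ξ))
    (hL1 : ∀ ξ, (Matrix.of fun (i : Fin k) (j : Fin m) =>
        (T * L ξ) (finSumFinEquiv (Sum.inl i)) j) = L₁ (xi11 T ξ))
    -- (H2): the correction term on the observable block converges to 0 along
    -- every trajectory of the coupled system:
    (hconv : ∀ (xh e : ℝ → Fin (k + l) → ℝ)
        (Ξ : ℝ → Matrix (Fin (k + l)) (Fin (k + l)) ℝ),
        (∀ t, HasDerivAt xh ((A + u₀ • B).mulVec (xh t) + u₀ • b -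
            (L (Ξ t) * Cm).mulVec (e t)) t) →
        (∀ t, HasDerivAt e ((A + u₀ • B - L (Ξ t) * Cm).mulVec (e t)) t) →
        (∀ t i j, HasDerivAt (fun s => Ξ s i j) ((f (Ξ t)) i j) t) →
        Filter.Tendsto (fun t => (L₁ (xi11 T (Ξ t))).mulVec
            ((blkC1 (Cm * T⁻¹)).mulVec (vec1 (T.mulVec (e t)))))
          Filter.atTop (nhds 0))
    -- (H3): ker L₁(ξ₁₁) ∩ Im C₁ = {0} on positive-definite ξ₁₁:
    (hker : ∀ ξk : Matrix (Fin k) (Fin k) ℝ, ξk.PosDef →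
        ∀ w : Fin m → ℝ, (L₁ ξk).mulVec w = 0 →
          w ∈ Set.range (blkC1 (Cm * T⁻¹)).mulVec → w = 0)
    -- the given trajectory, with constant x̂:
    (xhat ε : ℝ → Fin (k + l) → ℝ)
    (ξ : ℝ → Matrix (Fin (k + l)) (Fin (k + l)) ℝ)
    (hxhat : ∀ t, HasDerivAt xhat ((A + u₀ • B).mulVec (xhat t) + u₀ • b -
        (L (ξ t) * Cm).mulVec (ε t)) t)
    (hε : ∀ t, HasDerivAt ε ((A + u₀ • B - L (ξ t) * Cm).mulVec (ε t)) t)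
    (hξ : ∀ t i j, HasDerivAt (fun s => ξ s i j) ((f (ξ t)) i j) t)
    (hpos : ∀ t, (xi11 T (ξ t)).PosDef)
    (hconst : ∀ t, xhat t = xhat 0) :
    ∀ t : ℝ, 0 ≤ t → (L (ξ t)).mulVec (Cm.mulVec (ε t)) = 0 := by
    -- the correction term is constant in time
  set K : Fin (k + l) → ℝ := (A + u₀ • B).mulVec (xhat 0) + u₀ • b with hK
  have hxconst : ∀ t, (L (ξ t) * Cm).mulVec (ε t) = K := by
    intro t
    have h0 : HasDerivAt xhat 0 t := by
      have hx : xhat = fun _ => xhat 0 := funext hconst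
      rw [hx]; exact hasDerivAt_const t _
    have h2 := (hxhat t).unique h0
    rw [hconst t] at h2
    exact (sub_eq_zero.mp h2).symm
  -- the observable-block correction term equals a constant
  have hgconst : ∀ t, (L₁ (xi11 T (ξ t))).mulVec
      ((blkC1 (Cm * T⁻¹)).mulVec (vec1 (T.mulVec (ε t)))) = vec1 (T.mulVec K) := by
    intro t
    rw [key_C Cm T hT hC2]
    funext i
    have hrow : ∀ j, (L₁ (xi11 T (ξ t))) i j
        = (T * L (ξ t)) (finSumFinEquiv (Sum.inl i)) j := by
      intro j; rw [← hL1 (ξ t)]; rfl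
    calc (L₁ (xi11 T (ξ t))).mulVec (Cm.mulVec (ε t)) i
        = ∑ j, (T * L (ξ t)) (finSumFinEquiv (Sum.inl i)) j * (Cm.mulVec (ε t)) j := by
          simp [mulVec, dotProduct, hrow]
      _ = ((T * L (ξ t)).mulVec (Cm.mulVec (ε t))) (finSumFinEquiv (Sum.inl i)) := rfl
      _ = (T.mulVec ((L (ξ t) * Cm).mulVec (ε t))) (finSumFinEquiv (Sum.inl i)) := by
          have h3 : (T * L (ξ t)).mulVec (Cm.mulVec (ε t))
              = T.mulVec ((L (ξ t) * Cm).mulVec (ε t)) := by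
            rw [mulVec_mulVec, mulVec_mulVec, Matrix.mul_assoc]
          rw [h3]
      _ = vec1 (T.mulVec K) i := by rw [hxconst t]; rfl
  -- the constant tends to 0, hence equals 0
  have hlim := hconv xhat ε ξ hxhat hε hξ
  have hzero : vec1 (T.mulVec K) = 0 := by
    have hlim2 : Filter.Tendsto (fun _ : ℝ => vec1 (T.mulVec K))
        Filter.atTop (nhds 0) := by
      refine hlim.congr ?_
      intro t; exact hgconst t
    exact tendsto_nhds_unique tendsto_const_nhds hlim2
  intro t _
  have hL1zero : (L₁ (xi11 T (ξ t))).mulVec (Cm.mulVec (ε t)) = 0 := by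
    have := hgconst t
    rw [key_C Cm T hT hC2] at this
    rw [this, hzero]
  have hmem : Cm.mulVec (ε t) ∈ Set.range (blkC1 (Cm * T⁻¹)).mulVec :=
    ⟨vec1 (T.mulVec (ε t)), key_C Cm T hT hC2 (ε t)⟩
  have hw : Cm.mulVec (ε t) = 0 := hker _ (hpos t) _ hL1zero hmem
  rw [hw, mulVec_zero]
end
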